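/- Let f, g be positive continuous functions on Sⁿ⁻¹ and let {K_k} be a sequence of origin-symmetric convex bodies whose support functions h_k satisfy the uniform bounds ∫_{Sⁿ⁻¹} f log h_k dx ≤ C and min_{Sⁿ⁻¹} h_k → 0 as k → ∞, while the weighted log-volumes ∫_{Sⁿ⁻¹} g log ρ_{K_k} du are all equal to a fixed finite constant V₀. Then a contradiction follows; i.e., no such sequence exists. Equivalently: if origin-symmetric convex bodies have uniformly bounded support functions and fixed weighted log-volume V₀ = ∫ g log ρ du > −∞, then their support functions are uniformly bounded below by a positive constant. -/

import Mathlib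

/-!
If `h_K(x) = t` is small, then `K` lies in the half-space `⟪y, x⟫ ≤ t`, so the radial function
satisfies `ρ_K(u) ≤ 2t` on the spherical cap `⟪x, u⟫ ≥ 1/2`. That cap has surface measure at
least that of a ball of radius `1/2` in `ℝ^(n-1)` (project it orthogonally to `x`), while
`ρ_K ≤ h_K ≤ C` everywhere. Hence `∫ g log ρ_K ≤ (min g) · |cap| · log (2t) + |log C| · ∫ g`, and
fixing the left side at `V₀` bounds `t` from below. The integral is meaningful because the sphere
has finite `(n-1)`-dimensional Hausdorff measure (it is covered by finitely many caps, on each of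
which the projection has a Lipschitz inverse) and `ρ_K = 1 / gauge K` is continuous and positive.
-/

open MeasureTheory Metric Module Set Filter Topology
open scoped RealInnerProductSpace NNReal ENNReal Pointwise

section RadialFunction

variable {E : Type*} [NormedAddCommGroup E] [NormedSpace ℝ E] {K : Set E} {u : E} {r : ℝ}

theorem pos_of_isGreatest_radial (hK : K ∈ 𝓝 0)
    (hr : IsGreatest {c : ℝ | 0 ≤ c ∧ c • u ∈ K} r) : 0 < r := by
  have hsmul : Tendsto (fun c : ℝ => c • u) (𝓝[>] 0) (𝓝 0) :=
    tendsto_nhdsWithin_of_tendsto_nhds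
      ((continuous_id.smul continuous_const).tendsto' 0 0 (zero_smul ℝ u))
  obtain ⟨c, hcK, hc⟩ := ((hsmul.eventually hK).and self_mem_nhdsWithin).exists
  exact hc.trans_le (hr.2 ⟨hc.le, hcK⟩)

theorem eq_inv_gauge_of_isGreatest_radial (hr : IsGreatest {c : ℝ | 0 ≤ c ∧ c • u ∈ K} r)
    (hr0 : 0 < r) : r = (gauge K u)⁻¹ := by
  have hu : u ∈ r⁻¹ • K := ⟨r • u, hr.1.2, by simp [smul_smul, inv_mul_cancel₀ hr0.ne']⟩
  suffices gauge K u = r⁻¹ by rw [this, inv_inv]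
  refine le_antisymm (gauge_le_of_mem (inv_nonneg.2 hr0.le) hu) ?_
  rw [gauge_def]
  refine le_csInf ⟨r⁻¹, inv_pos.2 hr0, hu⟩ ?_
  rintro s ⟨hs, y, hy, rfl⟩
  have : s⁻¹ ≤ r :=
    hr.2 ⟨(inv_pos.2 hs).le, by rwa [smul_smul, inv_mul_cancel₀ hs.ne', one_smul]⟩
  exact inv_le_of_inv_le₀ hs this

theorem continuousOn_of_isGreatest_radial (hK : Convex ℝ K) (hK0 : K ∈ 𝓝 0) {ρ : E → ℝ}
    {s : Set E} (hρ : ∀ u ∈ s, IsGreatest {c : ℝ | 0 ≤ c ∧ c • u ∈ K} (ρ u)) :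
    ContinuousOn ρ s := by
  have hpos : ∀ u ∈ s, 0 < ρ u := fun u hu => pos_of_isGreatest_radial hK0 (hρ u hu)
  have hgauge : EqOn ρ (fun u => (gauge K u)⁻¹) s := fun u hu =>
    eq_inv_gauge_of_isGreatest_radial (hρ u hu) (hpos u hu)
  refine ContinuousOn.congr ((continuous_gauge hK hK0).continuousOn.inv₀ fun u hu => ?_) hgauge
  intro h0
  exact (hpos u hu).ne' (by simpa [h0] using hgauge hu)

end RadialFunction

theorem radial_mul_inner_le_support {E : Type*} [NormedAddCommGroup E] [InnerProductSpace ℝ E]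
    {K : Set E} {u x : E} {r t : ℝ} (hr : IsGreatest {c : ℝ | 0 ≤ c ∧ c • u ∈ K} r)
    (ht : IsGreatest {s : ℝ | ∃ y ∈ K, s = ⟪y, x⟫} t) : r * ⟪x, u⟫ ≤ t :=
  ht.2 ⟨r • u, hr.1.2, by rw [real_inner_smul_left, real_inner_comm]⟩

theorem hausdorffMeasure_le_mul_hausdorffMeasure_image {X Y : Type*} [MetricSpace X]
    [MeasurableSpace X] [BorelSpace X] [MetricSpace Y] [MeasurableSpace Y] [BorelSpace Y]
    {f : X → Y} {s : Set X} {K : ℝ≥0} (hf : ∀ a ∈ s, ∀ b ∈ s, dist a b ≤ K * dist (f a) (f b))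
    {d : ℝ} (hd : 0 ≤ d) : μH[d] s ≤ (K : ℝ≥0∞) ^ d * μH[d] (f '' s) := by
  rcases s.eq_empty_or_nonempty with rfl | ⟨a₀, -⟩
  · simp
  have : Nonempty X := ⟨a₀⟩
  have hinj : InjOn f s := fun a ha b hb hab =>
    dist_le_zero.1 (by simpa [hab] using hf a ha b hb)
  have hinv : LipschitzOnWith K (Function.invFunOn f s) (f '' s) := by
    refine LipschitzOnWith.of_dist_le_mul ?_
    rintro _ ⟨a, ha, rfl⟩ _ ⟨b, hb, rfl⟩
    rw [hinj.leftInvOn_invFunOn ha, hinj.leftInvOn_invFunOn hb]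
    exact hf a ha b hb
  calc μH[d] s ≤ μH[d] (Function.invFunOn f s '' (f '' s)) :=
        measure_mono fun a ha => ⟨f a, mem_image_of_mem f ha, hinj.leftInvOn_invFunOn ha⟩
    _ ≤ (K : ℝ≥0∞) ^ d * μH[d] (f '' s) := hinv.hausdorffMeasure_image_le hd

-- Mathlib's instance is stated for `μH[finrank ℝ E]`, which does not unify with `μH[m]`.
instance isAddHaarMeasure_hausdorffMeasure_euclideanSpace (m : ℕ) :
    Measure.IsAddHaarMeasure (μH[m] : Measure (EuclideanSpace ℝ (Fin m))) := by
  simpa using isAddHaarMeasure_hausdorffMeasure (E := EuclideanSpace ℝ (Fin m))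

section SphericalCap

variable {E : Type*} [NormedAddCommGroup E] [InnerProductSpace ℝ E]

def sphericalCap (x : E) (t : ℝ) : Set E := sphere 0 1 ∩ {u | t ≤ ⟪x, u⟫}

theorem isClosed_sphericalCap (x : E) (t : ℝ) : IsClosed (sphericalCap x t) :=
  isClosed_sphere.inter (isClosed_le continuous_const (continuous_const.inner continuous_id))

variable {x : E}

theorem dist_le_three_mul_dist_of_mem_sphericalCap {F : Type*} [NormedAddCommGroup F]
    [NormedSpace ℝ F] {P : E →L[ℝ] F}
    (hP : ∀ u, ‖u‖ ^ 2 = ⟪x, u⟫ ^ 2 + ‖P u‖ ^ 2) {a b : E}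
    (ha : a ∈ sphericalCap x (1 / 2)) (hb : b ∈ sphericalCap x (1 / 2)) :
    dist a b ≤ 3 * dist (P a) (P b) := by
  have ha2 : 1 / 2 ≤ ⟪x, a⟫ := ha.2
  have hb2 : 1 / 2 ≤ ⟪x, b⟫ := hb.2
  have hPa : 1 = ⟪x, a⟫ ^ 2 + ‖P a‖ ^ 2 := by rw [← hP a, mem_sphere_zero_iff_norm.1 ha.1, one_pow]
  have hPb : 1 = ⟪x, b⟫ ^ 2 + ‖P b‖ ^ 2 := by rw [← hP b, mem_sphere_zero_iff_norm.1 hb.1, one_pow]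
  have hab := hP (a - b)
  rw [inner_sub_right] at hab
  rw [dist_eq_norm, dist_eq_norm, ← map_sub]
  have hpq : |‖P a‖ - ‖P b‖| ≤ ‖P (a - b)‖ := by rw [map_sub]; exact abs_norm_sub_norm_le _ _
  have hdiff : (⟪x, a⟫ - ⟪x, b⟫) * (⟪x, a⟫ + ⟪x, b⟫) = (‖P b‖ - ‖P a‖) * (‖P a‖ + ‖P b‖) := by
    linear_combination hPb - hPa
  have hinner : |⟪x, a⟫ - ⟪x, b⟫| ≤ 2 * ‖P (a - b)‖ := by
    have habs := congrArg abs hdiff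
    rw [abs_mul, abs_mul, abs_sub_comm (‖P b‖), abs_of_pos (by linarith : 0 < ⟪x, a⟫ + ⟪x, b⟫),
      abs_of_nonneg (by positivity : 0 ≤ ‖P a‖ + ‖P b‖)] at habs
    have hPa1 : ‖P a‖ ≤ 1 := by nlinarith [norm_nonneg (P a)]
    have hPb1 : ‖P b‖ ≤ 1 := by nlinarith [norm_nonneg (P b)]
    calc |⟪x, a⟫ - ⟪x, b⟫| ≤ |⟪x, a⟫ - ⟪x, b⟫| * (⟪x, a⟫ + ⟪x, b⟫) :=
          le_mul_of_one_le_right (abs_nonneg _) (by linarith)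
      _ = |‖P a‖ - ‖P b‖| * (‖P a‖ + ‖P b‖) := habs
      _ ≤ ‖P (a - b)‖ * 2 := mul_le_mul hpq (by linarith) (by positivity) (norm_nonneg _)
      _ = 2 * ‖P (a - b)‖ := mul_comm _ _
  nlinarith [sq_abs (⟪x, a⟫ - ⟪x, b⟫), abs_nonneg (⟪x, a⟫ - ⟪x, b⟫), norm_nonneg (a - b),
    norm_nonneg (P (a - b))]

variable [FiniteDimensional ℝ E]

theorem cast_finrank_sub_one (hx : ‖x‖ = 1) :
    ((finrank ℝ E - 1 : ℕ) : ℝ) = finrank ℝ E - 1 := by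
  have : 0 < finrank ℝ E := finrank_pos_iff_exists_ne_zero.2 ⟨x, by rintro rfl; simp at hx⟩
  push_cast [Nat.one_le_iff_ne_zero.2 this.ne']
  rfl

theorem exists_orthogonalCoordinates (hx : ‖x‖ = 1) :
    ∃ P : E →L[ℝ] EuclideanSpace ℝ (Fin (finrank ℝ E - 1)),
      (∀ u, ‖u‖ ^ 2 = ⟪x, u⟫ ^ 2 + ‖P u‖ ^ 2) ∧ ∀ a w, ∃ u, ⟪x, u⟫ = a ∧ P u = w := by
  have hx0 : x ≠ 0 := by rintro rfl; simp at hx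
  have : Nontrivial E := ⟨⟨x, 0, hx0⟩⟩
  have : Fact (finrank ℝ E = finrank ℝ E - 1 + 1) :=
    ⟨(Nat.sub_add_cancel (finrank_pos (R := ℝ))).symm⟩
  let B := OrthonormalBasis.fromOrthogonalSpanSingleton (𝕜 := ℝ) (finrank ℝ E - 1) hx0
  refine ⟨B.repr.toContinuousLinearEquiv.toContinuousLinearMap ∘L
    (ℝ ∙ x)ᗮ.orthogonalProjectionOnto, fun u => ?_, fun a w => ⟨a • x + B.repr.symm w, ?_, ?_⟩⟩
  · have hproj : ‖(ℝ ∙ x).orthogonalProjectionOnto u‖ = |⟪x, u⟫| := by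
      rw [← Submodule.norm_coe, ← Submodule.starProjection_apply,
        Submodule.starProjection_singleton]
      simp [norm_smul, hx]
    simp [(ℝ ∙ x).norm_sq_eq_add_norm_sq_projection u, hproj]
  · have : ⟪x, (B.repr.symm w : E)⟫ = 0 :=
      Submodule.mem_orthogonal_singleton_iff_inner_right.1 (B.repr.symm w).2
    simp [inner_add_right, real_inner_smul_right, this, hx]
  · have : (ℝ ∙ x)ᗮ.orthogonalProjectionOnto (a • x) = 0 :=
      Submodule.orthogonalProjectionOnto_apply_of_mem_orthogonal
        (by simpa using Submodule.smul_mem _ a (Submodule.mem_span_singleton_self x))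
    simp [this, Submodule.orthogonalProjectionOnto_mem_subspace_eq_self]

variable [MeasurableSpace E] [BorelSpace E]

theorem hausdorffMeasure_ball_le_sphericalCap (hx : ‖x‖ = 1) :
    μH[(finrank ℝ E : ℝ) - 1] (ball (0 : EuclideanSpace ℝ (Fin (finrank ℝ E - 1))) (1 / 2)) ≤
      μH[(finrank ℝ E : ℝ) - 1] (sphericalCap x (1 / 2)) := by
  obtain ⟨P, hP, hPsurj⟩ := exists_orthogonalCoordinates hx
  have hPle : ∀ z, ‖P z‖ ≤ 1 * ‖z‖ := fun z => by
    nlinarith [hP z, norm_nonneg (P z), norm_nonneg z, sq_nonneg ⟪x, z⟫]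
  have hPlip : LipschitzWith 1 P :=
    P.lipschitzWith_of_opNorm_le (by simpa using P.opNorm_le_bound zero_le_one hPle)
  have hsub : ball 0 (1 / 2) ⊆ P '' sphericalCap x (1 / 2) := by
    intro w hw
    rw [mem_ball_zero_iff] at hw
    have hw0 : 0 ≤ 1 - ‖w‖ ^ 2 := by nlinarith [norm_nonneg w]
    obtain ⟨u, hxu, rfl⟩ := hPsurj (√(1 - ‖w‖ ^ 2)) w
    refine ⟨u, ⟨?_, ?_⟩, rfl⟩
    · have := hP u
      rw [hxu, Real.sq_sqrt hw0, sub_add_cancel] at this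
      rw [mem_sphere_zero_iff_norm]
      nlinarith [norm_nonneg u]
    · show 1 / 2 ≤ ⟪x, u⟫
      rw [hxu, Real.le_sqrt (by norm_num) hw0]
      nlinarith [norm_nonneg (P u)]
  have hd : 0 ≤ (finrank ℝ E : ℝ) - 1 := by rw [← cast_finrank_sub_one hx]; positivity
  calc _ ≤ μH[(finrank ℝ E : ℝ) - 1] (P '' sphericalCap x (1 / 2)) := measure_mono hsub
    _ ≤ _ := by simpa using hPlip.hausdorffMeasure_image_le hd (sphericalCap x (1 / 2))

theorem hausdorffMeasure_sphericalCap_lt_top (hx : ‖x‖ = 1) :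
    μH[(finrank ℝ E : ℝ) - 1] (sphericalCap x (1 / 2)) < ⊤ := by
  obtain ⟨P, hP, -⟩ := exists_orthogonalCoordinates hx
  have hd : 0 ≤ (finrank ℝ E : ℝ) - 1 := by rw [← cast_finrank_sub_one hx]; positivity
  have himage : P '' sphericalCap x (1 / 2) ⊆ closedBall 0 1 := by
    rintro _ ⟨u, hu, rfl⟩
    rw [mem_closedBall_zero_iff]
    have := hP u
    rw [mem_sphere_zero_iff_norm.1 hu.1] at this
    nlinarith [norm_nonneg (P u), sq_nonneg ⟪x, u⟫]
  have hball : μH[(finrank ℝ E : ℝ) - 1]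
      (closedBall (0 : EuclideanSpace ℝ (Fin (finrank ℝ E - 1))) 1) < ⊤ := by
    rw [← cast_finrank_sub_one hx]
    exact measure_closedBall_lt_top
  calc _ ≤ ((3 : ℝ≥0) : ℝ≥0∞) ^ ((finrank ℝ E : ℝ) - 1) *
        μH[(finrank ℝ E : ℝ) - 1] (P '' sphericalCap x (1 / 2)) :=
        hausdorffMeasure_le_mul_hausdorffMeasure_image
          (fun a ha b hb => dist_le_three_mul_dist_of_mem_sphericalCap hP ha hb) hd
    _ < ⊤ := ENNReal.mul_lt_top (ENNReal.rpow_lt_top_of_nonneg hd (by simp))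
        ((measure_mono himage).trans_lt hball)

theorem hausdorffMeasure_sphere_lt_top :
    μH[(finrank ℝ E : ℝ) - 1] (sphere (0 : E) 1) < ⊤ := by
  obtain ⟨t, htS, hcover⟩ := (isCompact_sphere (0 : E) 1).elim_nhds_subcover
    (fun x => {u | 1 / 2 < ⟪x, u⟫}) fun x hx => by
      refine (isOpen_lt continuous_const (continuous_const.inner continuous_id)).mem_nhds ?_
      simp [mem_sphere_zero_iff_norm.1 hx]
      norm_num
  have hcap : sphere (0 : E) 1 ⊆ ⋃ x ∈ t, sphericalCap x (1 / 2) := fun u hu => by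
    obtain ⟨x, hxt, hxu⟩ := mem_iUnion₂.1 (hcover hu)
    exact mem_iUnion₂.2 ⟨x, hxt, hu, (show (1 : ℝ) / 2 < ⟪x, u⟫ from hxu).le⟩
  calc _ ≤ ∑ x ∈ t, μH[(finrank ℝ E : ℝ) - 1] (sphericalCap x (1 / 2)) :=
        (measure_mono hcap).trans (measure_biUnion_finset_le _ _)
    _ < ⊤ := ENNReal.sum_lt_top.2 fun x hx =>
        hausdorffMeasure_sphericalCap_lt_top (mem_sphere_zero_iff_norm.1 (htS x hx))

theorem exists_pos_le_measureReal_sphericalCap : ∃ v > 0, ∀ x ∈ sphere (0 : E) 1,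
    v ≤ (μH[(finrank ℝ E : ℝ) - 1] : Measure E).real (sphericalCap x (1 / 2)) := by
  rcases (sphere (0 : E) 1).eq_empty_or_nonempty with hS | ⟨x₀, hx₀⟩
  · exact ⟨1, one_pos, by simp [hS]⟩
  have hx₀ : ‖x₀‖ = 1 := mem_sphere_zero_iff_norm.1 hx₀
  have hball : 0 < μH[(finrank ℝ E : ℝ) - 1]
        (ball (0 : EuclideanSpace ℝ (Fin (finrank ℝ E - 1))) (1 / 2)) ∧
      μH[(finrank ℝ E : ℝ) - 1] (ball (0 : EuclideanSpace ℝ (Fin (finrank ℝ E - 1))) (1 / 2))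
        < ⊤ := by
    rw [← cast_finrank_sub_one hx₀]
    exact ⟨measure_ball_pos _ _ (by norm_num), measure_ball_lt_top⟩
  refine ⟨_, ENNReal.toReal_pos hball.1.ne' hball.2.ne, fun x hx => ?_⟩
  have hx : ‖x‖ = 1 := mem_sphere_zero_iff_norm.1 hx
  exact ENNReal.toReal_mono (hausdorffMeasure_sphericalCap_lt_top hx).ne
    (hausdorffMeasure_ball_le_sphericalCap hx)

end SphericalCap

theorem setIntegral_mul_le_of_le_of_le {α : Type*} [MeasurableSpace α] {μ : Measure α}
    {S A : Set α} {g φ : α → ℝ} {a b c : ℝ} (hS : MeasurableSet S) (hA : MeasurableSet A)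
    (hAS : A ⊆ S) (hg : IntegrableOn g S μ) (hgφ : IntegrableOn (fun u => g u * φ u) S μ)
    (hg0 : ∀ u ∈ S, 0 ≤ g u) (hφA : ∀ u ∈ A, φ u ≤ a) (ha : a ≤ 0) (hc : c ≤ ∫ u in A, g u ∂μ)
    (hφS : ∀ u ∈ S, φ u ≤ b) (hb : 0 ≤ b) :
    ∫ u in S, g u * φ u ∂μ ≤ c * a + b * ∫ u in S, g u ∂μ := by
  rw [← integral_inter_add_sdiff hA hgφ, inter_eq_right.2 hAS]
  have hgφA : ∫ u in A, g u * φ u ∂μ ≤ ∫ u in A, g u * a ∂μ :=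
    setIntegral_mono_on (hgφ.mono_set hAS) ((hg.mono_set hAS).mul_const a) hA
      fun u hu => mul_le_mul_of_nonneg_left (hφA u hu) (hg0 u (hAS hu))
  have hgφS : ∫ u in S \ A, g u * φ u ∂μ ≤ ∫ u in S \ A, g u * b ∂μ :=
    setIntegral_mono_on (hgφ.mono_set sdiff_subset) ((hg.mono_set sdiff_subset).mul_const b)
      (hS.diff hA) fun u hu => mul_le_mul_of_nonneg_left (hφS u hu.1) (hg0 u hu.1)
  have hgS : ∫ u in S \ A, g u ∂μ ≤ ∫ u in S, g u ∂μ :=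
    setIntegral_mono_set hg ((ae_restrict_iff' hS).2 (.of_forall hg0)) sdiff_subset.eventuallyLE
  rw [integral_mul_const] at hgφA hgφS
  nlinarith [mul_le_mul_of_nonpos_right hc ha]

section SupportFunction

variable {E : Type*} [NormedAddCommGroup E] [InnerProductSpace ℝ E] [FiniteDimensional ℝ E]
  [MeasurableSpace E] [OpensMeasurableSpace E]

theorem le_support_of_setIntegral_mul_log_radial {μ : Measure E} (hμ : μ (sphere 0 1) ≠ ⊤)
    {v : ℝ} (hv : 0 < v) (hvcap : ∀ x ∈ sphere (0 : E) 1, v ≤ μ.real (sphericalCap x (1 / 2)))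
    {g : E → ℝ} (hg : ContinuousOn g (sphere 0 1)) {m : ℝ} (hm : 0 < m)
    (hmg : ∀ u ∈ sphere (0 : E) 1, m ≤ g u) {K : Set E} (hK : Convex ℝ K) (hK0 : K ∈ 𝓝 0)
    {h ρ : E → ℝ} {C : ℝ}
    (hh : ∀ x ∈ sphere (0 : E) 1, IsGreatest {r : ℝ | ∃ y ∈ K, r = ⟪y, x⟫} (h x))
    (hρ : ∀ u ∈ sphere (0 : E) 1, IsGreatest {c : ℝ | 0 ≤ c ∧ c • u ∈ K} (ρ u))
    (hC : ∀ x ∈ sphere (0 : E) 1, h x ≤ C) {x : E} (hx : x ∈ sphere (0 : E) 1) :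
    min (1 / 2) (Real.exp ((∫ u in sphere 0 1, g u * Real.log (ρ u) ∂μ -
      |Real.log C| * ∫ u in sphere 0 1, g u ∂μ) / (m * v)) / 2) ≤ h x := by
  have hS : MeasurableSet (sphere (0 : E) 1) := isClosed_sphere.measurableSet
  have hρpos : ∀ u ∈ sphere (0 : E) 1, 0 < ρ u := fun u hu =>
    pos_of_isGreatest_radial hK0 (hρ u hu)
  have hρh : ∀ u ∈ sphere (0 : E) 1, ρ u ≤ h u := fun u hu => by
    simpa [real_inner_self_eq_norm_sq, mem_sphere_zero_iff_norm.1 hu] using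
      radial_mul_inner_le_support (hρ u hu) (hh u hu)
  have hintegrable :
      ∀ {F : E → ℝ}, ContinuousOn F (sphere 0 1) → IntegrableOn F (sphere 0 1) μ :=
    fun hF => hF.integrableOn_of_subset_isCompact (isCompact_sphere 0 1) hS subset_rfl hμ
  have hlogρ : ContinuousOn (fun u => Real.log (ρ u)) (sphere 0 1) :=
    (continuousOn_of_isGreatest_radial hK hK0 hρ).log fun u hu => (hρpos u hu).ne'
  set t := h x
  have ht : 0 < t := (hρpos x hx).trans_le (hρh x hx)
  rcases le_or_gt (1 / 2) t with ht2 | ht2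
  · exact (min_le_left _ _).trans ht2
  refine (min_le_right _ _).trans ?_
  have hlog : Real.log (2 * t) < 0 := Real.log_neg (by positivity) (by linarith)
  have hcap : ∀ u ∈ sphericalCap x (1 / 2), Real.log (ρ u) ≤ Real.log (2 * t) := fun u hu => by
    have := radial_mul_inner_le_support (hρ u hu.1) (hh x hx)
    have hu2 : 1 / 2 ≤ ⟪x, u⟫ := hu.2
    exact Real.log_le_log (hρpos u hu.1) (by nlinarith [hρpos u hu.1])
  have hcapMeas : MeasurableSet (sphericalCap x (1 / 2)) :=
    (isClosed_sphericalCap x _).measurableSet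
  have hcapg : m * v ≤ ∫ u in sphericalCap x (1 / 2), g u ∂μ :=
    (mul_le_mul_of_nonneg_left (hvcap x hx) hm.le).trans <| setIntegral_ge_of_const_le_real
      hcapMeas ((measure_mono inter_subset_left).trans_lt hμ.lt_top).ne (fun u hu => hmg u hu.1)
      ((hintegrable hg).mono_set inter_subset_left)
  have key := setIntegral_mul_le_of_le_of_le hS hcapMeas inter_subset_left (hintegrable hg)
    (hintegrable (hg.mul hlogρ)) (fun u hu => (hm.trans_le (hmg u hu)).le) hcap hlog.le hcapg
    (fun u hu => (Real.log_le_log (hρpos u hu) ((hρh u hu).trans (hC u hu))).trans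
      (le_abs_self _)) (abs_nonneg _)
  have hle : (∫ u in sphere 0 1, g u * Real.log (ρ u) ∂μ -
      |Real.log C| * ∫ u in sphere 0 1, g u ∂μ) / (m * v) ≤ Real.log (2 * t) := by
    rw [div_le_iff₀ (by positivity)]
    linarith
  calc _ ≤ Real.exp (Real.log (2 * t)) / 2 := by gcongr
    _ = t := by rw [Real.exp_log (by positivity)]; ring

end SupportFunction

theorem uniform_lower_bound_support_functions_general {n : ℕ}
    (g : EuclideanSpace ℝ (Fin n) → ℝ) (hg : Continuous g)
    (hgpos : ∀ u ∈ Metric.sphere (0 : EuclideanSpace ℝ (Fin n)) 1, 0 < g u)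
    (C V₀ : ℝ)
    (K : ℕ → Set (EuclideanSpace ℝ (Fin n)))
    (hconv : ∀ k, Convex ℝ (K k))
    (h0 : ∀ k, (0 : EuclideanSpace ℝ (Fin n)) ∈ interior (K k))
    (h ρ : ℕ → EuclideanSpace ℝ (Fin n) → ℝ)
    (hh : ∀ k, ∀ x ∈ Metric.sphere (0 : EuclideanSpace ℝ (Fin n)) 1,
      IsGreatest {r : ℝ | ∃ y ∈ K k, r = ⟪y, x⟫} (h k x))
    (hρ : ∀ k, ∀ u ∈ Metric.sphere (0 : EuclideanSpace ℝ (Fin n)) 1,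
      IsGreatest {c : ℝ | 0 ≤ c ∧ c • u ∈ K k} (ρ k u))
    (hbound : ∀ k, ∀ x ∈ Metric.sphere (0 : EuclideanSpace ℝ (Fin n)) 1, h k x ≤ C)
    (hvol : ∀ k, ∫ u in Metric.sphere (0 : EuclideanSpace ℝ (Fin n)) 1,
      g u * Real.log (ρ k u) ∂μH[(n : ℝ) - 1] = V₀) :
    ∃ c > 0, ∀ k, ∀ x ∈ Metric.sphere (0 : EuclideanSpace ℝ (Fin n)) 1, c ≤ h k x := by
  obtain ⟨m, hm, hmg⟩ :=
    (isCompact_sphere (0 : EuclideanSpace ℝ (Fin n)) 1).exists_forall_le' hg.continuousOn hgpos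
  obtain ⟨v, hv, hvcap⟩ := exists_pos_le_measureReal_sphericalCap (E := EuclideanSpace ℝ (Fin n))
  have hS := hausdorffMeasure_sphere_lt_top (E := EuclideanSpace ℝ (Fin n))
  rw [finrank_euclideanSpace_fin] at hvcap hS
  refine ⟨min (1 / 2) (Real.exp ((V₀ - |Real.log C| *
    ∫ u in sphere 0 1, g u ∂μH[(n : ℝ) - 1]) / (m * v)) / 2), by positivity, fun k x hx => ?_⟩
  have := le_support_of_setIntegral_mul_log_radial hS.ne hv hvcap hg.continuousOn hm hmg
    (hconv k) (mem_interior_iff_mem_nhds.1 (h0 k)) (hh k) (hρ k) (hbound k) hx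
  rwa [hvol k] at this

/-- Origin-symmetric convex bodies with uniformly bounded support functions and
fixed weighted log-volume `V₀ = ∫ g log ρ dμ` (w.r.t. spherical Lebesgue measure, `g` positive
continuous) have support functions uniformly bounded below by a positive constant. -/
theorem uniform_lower_bound_support_functions {n : ℕ} (hn : 2 ≤ n)
    (g : EuclideanSpace ℝ (Fin n) → ℝ) (hg : Continuous g)
    (hgpos : ∀ u ∈ Metric.sphere (0 : EuclideanSpace ℝ (Fin n)) 1, 0 < g u)
    (C V₀ : ℝ) (hC : 0 < C)
    (K : ℕ → Set (EuclideanSpace ℝ (Fin n)))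
    (hconv : ∀ k, Convex ℝ (K k)) (hcomp : ∀ k, IsCompact (K k))
    (h0 : ∀ k, (0 : EuclideanSpace ℝ (Fin n)) ∈ interior (K k))
    (hsymm : ∀ k, ∀ y ∈ K k, -y ∈ K k)
    (h ρ : ℕ → EuclideanSpace ℝ (Fin n) → ℝ)
    (hh : ∀ k, ∀ x ∈ Metric.sphere (0 : EuclideanSpace ℝ (Fin n)) 1,
      IsGreatest {r : ℝ | ∃ y ∈ K k, r = ⟪y, x⟫} (h k x))
    (hρ : ∀ k, ∀ u ∈ Metric.sphere (0 : EuclideanSpace ℝ (Fin n)) 1,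
      IsGreatest {c : ℝ | 0 ≤ c ∧ c • u ∈ K k} (ρ k u))
    (hbound : ∀ k, ∀ x ∈ Metric.sphere (0 : EuclideanSpace ℝ (Fin n)) 1, h k x ≤ C)
    (hvol : ∀ k, ∫ u in Metric.sphere (0 : EuclideanSpace ℝ (Fin n)) 1,
      g u * Real.log (ρ k u) ∂μH[(n : ℝ) - 1] = V₀) :
    ∃ c > 0, ∀ k, ∀ x ∈ Metric.sphere (0 : EuclideanSpace ℝ (Fin n)) 1, c ≤ h k x :=
  uniform_lower_bound_support_functions_general g hg hgpos C V₀ K hconv h0 h ρ hh hρ hbound hvol
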